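/- arXiv:2411.06476 — 2 statements merged into one kernel-verified Lean document; each statement's English description precedes it below -/
import Mathlib

section
/- One SGD step satisfies E[⟨x_{k+1} − x*, v_ℓ⟩² | x_k] ≤ (1 − 2α_k σ_ℓ²) ⟨x_k − x*, v_ℓ⟩² + α_k² M L̃ c(A) σ_max² ‖x_k − x*‖² + 2 α_k² M L̃ F*. -/
/-!
Write `e = x_k − x*` and `r = A x* − b`. Since `x*` minimises `‖Ax − b‖²`, `r` is orthogonal to the
range of `A` (normal equations). Hence the residual `A x_k − b = A e + r` has mean correlation
`σ_ℓ² ⟨e, v⟩` with `A v` (as `AᵀA v = σ_ℓ² v`) and squared norm `‖A e‖² + 2F*`. Expanding the square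
of `⟨e, v⟩ − α M (a_iᵀx_k − b_i)⟨a_i, v⟩` and averaging over `i`, the cross term gives the contraction
`−2α σ_ℓ²⟨e, v⟩²`, while the quadratic term is bounded via `⟨a_i, v⟩² ≤ ‖a_i‖² ≤ L̃`,
`‖A e‖² ≤ σ_max²‖e‖²` and `c(A) ≥ 1`.
-/

open Matrix Finset

lemma mean_sq_sub_card_mul {ι : Type*} [Fintype ι] [Nonempty ι] (s c : ℝ) (z : ι → ℝ) :
    (1 / (Fintype.card ι : ℝ)) * ∑ i, (s - c * Fintype.card ι * z i) ^ 2 =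
      s ^ 2 - 2 * c * s * ∑ i, z i + c ^ 2 * Fintype.card ι * ∑ i, z i ^ 2 := by
  have hcard : (Fintype.card ι : ℝ) ≠ 0 := Nat.cast_ne_zero.2 Fintype.card_ne_zero
  simp only [sub_sq, Finset.sum_add_distrib, Finset.sum_sub_distrib, mul_pow, ← Finset.mul_sum,
    Finset.sum_const, Finset.card_univ, nsmul_eq_mul]
  field_simp

lemma sum_sq_mul_le_mul_sum_sq {ι : Type*} [Fintype ι] (ρ τ : ι → ℝ) {L : ℝ}
    (hτ : ∀ i, τ i ^ 2 ≤ L) : ∑ i, (ρ i * τ i) ^ 2 ≤ L * ∑ i, ρ i ^ 2 := by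
  rw [Finset.mul_sum]
  gcongr with i
  rw [mul_pow, mul_comm]
  exact mul_le_mul_of_nonneg_right (hτ i) (sq_nonneg _)

section DotProduct

variable {m n : Type*} [Fintype m] [Fintype n]

lemma dotProduct_self_nonneg (v : n → ℝ) : 0 ≤ v ⬝ᵥ v :=
  Finset.sum_nonneg fun i _ => mul_self_nonneg (v i)

lemma sq_dotProduct_le (x y : n → ℝ) : (x ⬝ᵥ y) ^ 2 ≤ (x ⬝ᵥ x) * (y ⬝ᵥ y) := by
  simpa [dotProduct, sq] using Finset.sum_mul_sq_le_sq_mul_sq Finset.univ x y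

lemma mulVec_dotProduct_mulVec {R : Type*} [CommSemiring R] (A : Matrix m n R) (x y : n → R) :
    (A *ᵥ x) ⬝ᵥ (A *ᵥ y) = x ⬝ᵥ ((Aᵀ * A) *ᵥ y) := by
  rw [← mulVec_mulVec, dotProduct_mulVec x, vecMul_transpose]

lemma dotProduct_eq_zero_of_forall_le_add_smul {r w : n → ℝ}
    (h : ∀ t : ℝ, r ⬝ᵥ r ≤ (r + t • w) ⬝ᵥ (r + t • w)) : w ⬝ᵥ r = 0 := by
  have hquad : ∀ t : ℝ, 0 ≤ (w ⬝ᵥ w) * (t * t) + 2 * (w ⬝ᵥ r) * t + 0 := fun t => by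
    have := h t
    simp only [add_dotProduct, dotProduct_add, smul_dotProduct, dotProduct_smul, smul_eq_mul,
      dotProduct_comm r w] at this
    linarith
  have hdiscr := discrim_le_zero hquad
  rw [discrim] at hdiscr
  exact pow_eq_zero_iff two_ne_zero |>.mp (le_antisymm (by linarith) (sq_nonneg _))

lemma mulVec_dotProduct_self_le {A : Matrix m n ℝ} {s : ℝ}
    (h : ∀ y, y ⬝ᵥ y = 1 → (A *ᵥ y) ⬝ᵥ (A *ᵥ y) ≤ s) (x : n → ℝ) :
    (A *ᵥ x) ⬝ᵥ (A *ᵥ x) ≤ s * (x ⬝ᵥ x) := by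
  rcases eq_or_ne x 0 with rfl | hx
  · simp
  have hpos : 0 < x ⬝ᵥ x :=
    (dotProduct_self_nonneg x).lt_of_ne (Ne.symm (dotProduct_self_eq_zero.not.2 hx))
  set c := (√(x ⬝ᵥ x))⁻¹
  have hc : c * c * (x ⬝ᵥ x) = 1 := by
    rw [← mul_inv, Real.mul_self_sqrt hpos.le, inv_mul_cancel₀ hpos.ne']
  have hunit := h (c • x) (by simpa [smul_dotProduct, dotProduct_smul, mul_assoc] using hc)
  simp only [mulVec_smul, smul_dotProduct, dotProduct_smul, smul_eq_mul] at hunit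
  calc (A *ᵥ x) ⬝ᵥ (A *ᵥ x) = (c * (c * ((A *ᵥ x) ⬝ᵥ (A *ᵥ x)))) * (x ⬝ᵥ x) := by
        linear_combination (-((A *ᵥ x) ⬝ᵥ (A *ᵥ x))) * hc
    _ ≤ s * (x ⬝ᵥ x) := by gcongr

end DotProduct

section LeastSquares

variable {m n : Type*} [Fintype n] {A : Matrix m n ℝ} {b : m → ℝ} {x₀ : n → ℝ}

lemma residual_eq_mulVec_sub_add (x : n → ℝ) : A *ᵥ x - b = A *ᵥ (x - x₀) + (A *ᵥ x₀ - b) := by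
  rw [mulVec_sub]; abel

variable [Fintype m]

lemma mulVec_dotProduct_residual_eq_zero
    (hmin : ∀ y, (A *ᵥ x₀ - b) ⬝ᵥ (A *ᵥ x₀ - b) ≤ (A *ᵥ y - b) ⬝ᵥ (A *ᵥ y - b)) (d : n → ℝ) :
    (A *ᵥ d) ⬝ᵥ (A *ᵥ x₀ - b) = 0 :=
  dotProduct_eq_zero_of_forall_le_add_smul fun t => by
    simpa [mulVec_add, mulVec_smul, add_sub_right_comm] using hmin (x₀ + t • d)

lemma residual_dotProduct_mulVec_of_eigenvector (hx₀ : ∀ d, (A *ᵥ d) ⬝ᵥ (A *ᵥ x₀ - b) = 0)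
    {v : n → ℝ} {μ : ℝ} (hv : (Aᵀ * A) *ᵥ v = μ • v) (x : n → ℝ) :
    (A *ᵥ x - b) ⬝ᵥ (A *ᵥ v) = μ * ((x - x₀) ⬝ᵥ v) := by
  rw [residual_eq_mulVec_sub_add (x₀ := x₀), add_dotProduct, dotProduct_comm (A *ᵥ x₀ - b), hx₀,
    mulVec_dotProduct_mulVec, hv, dotProduct_smul, smul_eq_mul, add_zero]

lemma residual_dotProduct_self (hx₀ : ∀ d, (A *ᵥ d) ⬝ᵥ (A *ᵥ x₀ - b) = 0) (x : n → ℝ) :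
    (A *ᵥ x - b) ⬝ᵥ (A *ᵥ x - b) =
      (A *ᵥ (x - x₀)) ⬝ᵥ (A *ᵥ (x - x₀)) + (A *ᵥ x₀ - b) ⬝ᵥ (A *ᵥ x₀ - b) := by
  rw [residual_eq_mulVec_sub_add (x₀ := x₀), add_dotProduct, dotProduct_add, dotProduct_add, hx₀,
    dotProduct_comm (A *ᵥ x₀ - b), hx₀]
  ring

lemma sum_sq_residual_mul_dotProduct_le (hx₀ : ∀ d, (A *ᵥ d) ⬝ᵥ (A *ᵥ x₀ - b) = 0) {L : ℝ}
    (hL : ∀ i, A i ⬝ᵥ A i ≤ L) {v : n → ℝ} (hv : v ⬝ᵥ v = 1) (x : n → ℝ) :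
    ∑ i, ((A *ᵥ x - b) i * (A i ⬝ᵥ v)) ^ 2 ≤
      L * ((A *ᵥ (x - x₀)) ⬝ᵥ (A *ᵥ (x - x₀)) + (A *ᵥ x₀ - b) ⬝ᵥ (A *ᵥ x₀ - b)) := by
  rw [← residual_dotProduct_self hx₀]
  refine (sum_sq_mul_le_mul_sum_sq _ _ fun i => ?_).trans_eq
    (congrArg _ (Finset.sum_congr rfl fun i _ => sq _))
  calc (A i ⬝ᵥ v) ^ 2 ≤ (A i ⬝ᵥ A i) * (v ⬝ᵥ v) := sq_dotProduct_le (A i) v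
    _ ≤ L := by rw [hv, mul_one]; exact hL i

end LeastSquares

lemma sgd_step_sub_dotProduct {n : Type*} [Fintype n] (x x₀ a v : n → ℝ) (c ρ : ℝ) :
    ((x - (c * ρ) • a) - x₀) ⬝ᵥ v = (x - x₀) ⬝ᵥ v - c * (ρ * (a ⬝ᵥ v)) := by
  rw [sub_right_comm, sub_dotProduct, smul_dotProduct, smul_eq_mul, mul_assoc]

/-- One SGD step `x_{k+1} = x_k − α_k ∇f_{i}(x_k)` with `f_i(x) = (M/2)(a_iᵀx − b_i)²`
and `i` uniform on `{1,…,M}` satisfies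
`E[⟨x_{k+1} − x*, v_ℓ⟩²] ≤ (1 − 2α_k σ_ℓ²)⟨x_k − x*, v_ℓ⟩²
  + α_k² M L̃ c(A) σ_max² ‖x_k − x*‖² + 2 α_k² M L̃ F*`. -/
theorem stmt_7 {M N : ℕ} (hM : 0 < M) (A : Matrix (Fin M) (Fin N) ℝ) (b : Fin M → ℝ)
    (σmax σmin : ℝ) (hσmin : 0 < σmin)
    (hσmax : IsGreatest {t : ℝ | ∃ y : Fin N → ℝ, y ⬝ᵥ y = 1 ∧
      (A.mulVec y) ⬝ᵥ (A.mulVec y) = t} (σmax ^ 2))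
    (hσminIsLeast : IsLeast {t : ℝ | ∃ y : Fin N → ℝ, y ⬝ᵥ y = 1 ∧
      (A.mulVec y) ⬝ᵥ (A.mulVec y) = t} (σmin ^ 2))
    (Ltil : ℝ) (hLtil : IsGreatest {t : ℝ | ∃ i : Fin M, (A i) ⬝ᵥ (A i) = t} Ltil)
    (Fstar : ℝ)
    (hFstar : IsLeast {t : ℝ | ∃ y : Fin N → ℝ,
      (1 / 2) * ((A.mulVec y - b) ⬝ᵥ (A.mulVec y - b)) = t} Fstar)
    (xstar : Fin N → ℝ)
    (hxstar : (1 / 2) * ((A.mulVec xstar - b) ⬝ᵥ (A.mulVec xstar - b)) = Fstar)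
    (σℓ : ℝ) (v : Fin N → ℝ) (hv : (Aᵀ * A).mulVec v = σℓ ^ 2 • v) (hv1 : v ⬝ᵥ v = 1)
    (αk : ℝ) (xk : Fin N → ℝ) :
    (1 / (M : ℝ)) * ∑ i : Fin M,
        (((xk - (αk * M * (A i ⬝ᵥ xk - b i)) • A i) - xstar) ⬝ᵥ v) ^ 2 ≤
      (1 - 2 * αk * σℓ ^ 2) * ((xk - xstar) ⬝ᵥ v) ^ 2 +
        αk ^ 2 * (M : ℝ) * Ltil * (σmax ^ 2 / σmin ^ 2) * σmax ^ 2 *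
          ((xk - xstar) ⬝ᵥ (xk - xstar)) +
        2 * αk ^ 2 * (M : ℝ) * Ltil * Fstar := by
  have hnormal : ∀ d, (A *ᵥ d) ⬝ᵥ (A *ᵥ xstar - b) = 0 :=
    mulVec_dotProduct_residual_eq_zero fun y => by linarith [hFstar.2 ⟨y, rfl⟩]
  set e := xk - xstar
  have hcross : ∑ i, (A i ⬝ᵥ xk - b i) * (A i ⬝ᵥ v) = σℓ ^ 2 * (e ⬝ᵥ v) :=
    residual_dotProduct_mulVec_of_eigenvector hnormal hv xk
  have hcond : 1 ≤ σmax ^ 2 / σmin ^ 2 := (one_le_div (by positivity)).2 (hσmax.2 hσminIsLeast.1)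
  have hAe : (A *ᵥ e) ⬝ᵥ (A *ᵥ e) ≤ σmax ^ 2 / σmin ^ 2 * σmax ^ 2 * (e ⬝ᵥ e) := calc
    _ ≤ σmax ^ 2 * (e ⬝ᵥ e) := mulVec_dotProduct_self_le (fun y hy => hσmax.2 ⟨y, hy, rfl⟩) e
    _ ≤ _ := by
      rw [mul_assoc]
      exact le_mul_of_one_le_left (by positivity [dotProduct_self_nonneg e]) hcond
  have hquad : ∑ i, ((A i ⬝ᵥ xk - b i) * (A i ⬝ᵥ v)) ^ 2 ≤
      Ltil * (σmax ^ 2 / σmin ^ 2 * σmax ^ 2 * (e ⬝ᵥ e) + 2 * Fstar) := by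
    have hLtil_nonneg : 0 ≤ Ltil := by
      obtain ⟨i, hi⟩ := hLtil.1
      exact hi ▸ dotProduct_self_nonneg (A i)
    refine (sum_sq_residual_mul_dotProduct_le hnormal (fun i => hLtil.2 ⟨i, rfl⟩) hv1 xk).trans ?_
    gcongr
    linarith
  have : Nonempty (Fin M) := ⟨⟨0, hM⟩⟩
  have hmean := mean_sq_sub_card_mul (e ⬝ᵥ v) αk fun i => (A i ⬝ᵥ xk - b i) * (A i ⬝ᵥ v)
  rw [Fintype.card_fin, hcross] at hmean
  simp only [sgd_step_sub_dotProduct]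
  rw [hmean]
  linarith [mul_le_mul_of_nonneg_left hquad (by positivity : (0 : ℝ) ≤ αk ^ 2 * M)]
end

section
/- If SGD is run with step size α_k = a/(b+k) for a, b > 0, then |E[⟨x_{n+1} − x*, v_ℓ⟩]| ≤ (b/(b+n))^{a σ_ℓ²} |⟨x_0 − x*, v_ℓ⟩|, assuming a σ_ℓ² ≤ b. -/
open Matrix Finset

/-!
Write `e_k = ⟨x_k - x*, v⟩`. The normal equations `Aᵀ(Ax* - b) = 0` and `AᵀA v = σ² v` make the
average of one SGD step over the uniformly drawn row equal to `(1 - α_k σ²) e_k`; since `x_k`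
depends only on the first `k` indices, averaging over all index sequences gives
`E e_{n+1} = ∏_{k ≤ n} (1 - α_k σ²) e_0`. By `1 - u ≤ exp (-u)` and `log (1 + 1/t) ≤ 1/t`, each
factor is at most `((c + k) / (c + k + 1)) ^ (a σ²)`, and the product telescopes.
-/

theorem eq_zero_of_forall_mul_add_sq_mul_nonneg {p q : ℝ} (h : ∀ t : ℝ, 0 ≤ t * p + t ^ 2 * q) :
    p = 0 := by
  have hpos : 0 < |q| + 1 := by positivity
  have := h (-p / (|q| + 1))
  have hq : q ≤ |q| := le_abs_self q
  field_simp at this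
  nlinarith [sq_nonneg p, mul_nonneg (sq_nonneg p) (sub_nonneg.2 hq)]

section LeastSquares

variable {ι κ : Type*} [Fintype ι] [Fintype κ] (A : Matrix ι κ ℝ) (b : ι → ℝ) {xstar : κ → ℝ}

def sgdStep (η : ℝ) (y : κ → ℝ) (i : ι) : κ → ℝ :=
  y + (η * (b i - A i ⬝ᵥ y)) • A i

variable {A b}

theorem residual_dotProduct_mulVec_eq_zero
    (hxstar : ∀ y, (A *ᵥ xstar - b) ⬝ᵥ (A *ᵥ xstar - b) ≤ (A *ᵥ y - b) ⬝ᵥ (A *ᵥ y - b))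
    (w : κ → ℝ) : (A *ᵥ xstar - b) ⬝ᵥ A *ᵥ w = 0 := by
  set r := A *ᵥ xstar - b
  have h2 : 2 * (r ⬝ᵥ A *ᵥ w) = 0 := by
    refine eq_zero_of_forall_mul_add_sq_mul_nonneg (q := A *ᵥ w ⬝ᵥ A *ᵥ w) fun t => ?_
    have hexp : A *ᵥ (xstar + t • w) - b = r + t • A *ᵥ w := by
      rw [mulVec_add, mulVec_smul, add_sub_right_comm]
    have := hxstar (xstar + t • w)
    rw [hexp] at this
    simp only [dotProduct_add, add_dotProduct, dotProduct_smul, smul_dotProduct, smul_eq_mul,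
      dotProduct_comm (A *ᵥ w) r] at this
    linarith
  linarith

theorem sum_sgdStep_sub_dotProduct {v : κ → ℝ} {μ : ℝ}
    (hxstar : ∀ y, (A *ᵥ xstar - b) ⬝ᵥ (A *ᵥ xstar - b) ≤ (A *ᵥ y - b) ⬝ᵥ (A *ᵥ y - b))
    (hv : (Aᵀ * A) *ᵥ v = μ • v) (η : ℝ) (y : κ → ℝ) :
    ∑ i, (sgdStep A b η y i - xstar) ⬝ᵥ v =
      (Fintype.card ι - η * μ) * ((y - xstar) ⬝ᵥ v) := by
  have hgrad : ∑ i, (b i - A i ⬝ᵥ y) * (A i ⬝ᵥ v) = μ * ((xstar - y) ⬝ᵥ v) :=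
    calc ∑ i, (b i - A i ⬝ᵥ y) * (A i ⬝ᵥ v)
        = (A *ᵥ (xstar - y) - (A *ᵥ xstar - b)) ⬝ᵥ A *ᵥ v := by
          simp only [mulVec_sub, sub_sub_sub_cancel_left]; rfl
      _ = A *ᵥ (xstar - y) ⬝ᵥ A *ᵥ v := by
          rw [sub_dotProduct, residual_dotProduct_mulVec_eq_zero hxstar, sub_zero]
      _ = (xstar - y) ⬝ᵥ (Aᵀ * A) *ᵥ v := by
          rw [← mulVec_mulVec, dotProduct_mulVec (xstar - y) Aᵀ, vecMul_transpose]
      _ = μ * ((xstar - y) ⬝ᵥ v) := by rw [hv, dotProduct_smul, smul_eq_mul]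
  simp only [sgdStep, add_sub_right_comm, add_dotProduct, smul_dotProduct, smul_eq_mul,
    sum_add_distrib, mul_assoc, ← mul_sum, hgrad, sum_const, card_univ, nsmul_eq_mul, ← neg_sub y xstar, neg_dotProduct]
  ring

end LeastSquares

theorem Fintype.sum_sum_update {ι β M : Type*} [DecidableEq ι] [Fintype ι] [Fintype β]
    [AddCommMonoid M] (K : ι) (F : (ι → β) → M) :
    ∑ ω, ∑ m, F (Function.update ω K m) = Fintype.card β • ∑ ω, F ω := by
  -- `(ω, m) ↦ (update ω K m, ω K)` is an involution of `(ι → β) × β`.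
  let e : (ι → β) × β ≃ (ι → β) × β :=
    { toFun := fun p => (Function.update p.1 K p.2, p.1 K)
      invFun := fun p => (Function.update p.1 K p.2, p.1 K)
      left_inv := fun p => by simp
      right_inv := fun p => by simp }
  rw [← Fintype.sum_prod_type', ← e.sum_comp, Fintype.sum_prod_type, sum_comm]
  simp [e]

theorem eq_prod_range_mul_of_succ_eq {R : Type*} [CommMonoid R] {u r : ℕ → R} {m : ℕ}
    (h : ∀ k < m, u (k + 1) = r k * u k) : u m = (∏ k ∈ range m, r k) * u 0 := by
  induction m with
  | zero => simp
  | succ m ih =>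
    rw [h m m.lt_succ_self, ih fun k hk => h k (hk.trans m.lt_succ_self), prod_range_succ]
    ac_rfl

section Paths

variable {ι : Type*} {n : ℕ}

-- Entries past `n` are never read by the first `n + 1` iterates; `ω 0` is just a filler.
def padPath (ω : Fin (n + 1) → ι) : ℕ → ι :=
  fun j => if h : j < n + 1 then ω ⟨j, h⟩ else ω 0

theorem padPath_update_self (ω : Fin (n + 1) → ι) (K : Fin (n + 1)) (m : ι) :
    padPath (Function.update ω K m) K = m := by
  simp [padPath, K.isLt]

theorem padPath_update_of_lt (ω : Fin (n + 1) → ι) {K : Fin (n + 1)} (m : ι) {j : ℕ}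
    (hj : j < K) : padPath (Function.update ω K m) j = padPath ω j := by
  have hjn : j < n + 1 := hj.trans K.isLt
  have hne : (⟨j, hjn⟩ : Fin (n + 1)) ≠ K := Fin.ne_of_lt hj
  simp [padPath, hjn, hne]

variable {E : Type*} {x : (ℕ → ι) → ℕ → E} {step : ℕ → E → ι → E} {x0 : E}

theorem iterate_eq_of_eqOn_prefix (hx0 : ∀ ω, x ω 0 = x0)
    (hupd : ∀ ω k, x ω (k + 1) = step k (x ω k) (ω k)) {ω ω' : ℕ → ι} {k : ℕ}
    (h : ∀ j < k, ω j = ω' j) : x ω k = x ω' k := by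
  induction k with
  | zero => rw [hx0, hx0]
  | succ k ih =>
    rw [hupd, hupd, ih fun j hj => h j (hj.trans k.lt_succ_self), h k k.lt_succ_self]

theorem card_mul_sum_iterate_succ [Fintype ι] (hx0 : ∀ ω, x ω 0 = x0)
    (hupd : ∀ ω k, x ω (k + 1) = step k (x ω k) (ω k)) (g : E → ℝ) (K : Fin (n + 1)) :
    Fintype.card ι * ∑ ω : Fin (n + 1) → ι, g (x (padPath ω) (K + 1)) =
      ∑ ω : Fin (n + 1) → ι, ∑ i, g (step K (x (padPath ω) K) i) := by
  rw [← nsmul_eq_mul, ← Fintype.sum_sum_update K]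
  refine sum_congr rfl fun ω _ => sum_congr rfl fun i _ => ?_
  rw [hupd, padPath_update_self,
    iterate_eq_of_eqOn_prefix hx0 hupd fun j hj => padPath_update_of_lt ω i hj]

end Paths

theorem one_sub_div_le_div_add_one_rpow {s t : ℝ} (hs : 0 ≤ s) (ht : 0 < t) :
    1 - s / t ≤ (t / (t + 1)) ^ s := by
  have hlog : -(1 / t) ≤ Real.log (t / (t + 1)) := by
    rw [← neg_le_neg_iff, ← Real.log_inv, inv_div, neg_neg]
    calc Real.log ((t + 1) / t) ≤ (t + 1) / t - 1 := Real.log_le_sub_one_of_pos (by positivity)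
      _ = 1 / t := by field_simp; ring
  calc 1 - s / t ≤ Real.exp (-(1 / t) * s) := by
        linarith [Real.add_one_le_exp (-(1 / t) * s), show -(1 / t) * s = -(s / t) by ring]
    _ ≤ Real.exp (Real.log (t / (t + 1)) * s) :=
        Real.exp_le_exp.2 (mul_le_mul_of_nonneg_right hlog hs)
    _ = (t / (t + 1)) ^ s := (Real.rpow_def_of_pos (by positivity) s).symm

theorem prod_range_one_sub_div_le_rpow {s c : ℝ} (hs : 0 ≤ s) (hc : 0 < c) (hsc : s ≤ c)
    (m : ℕ) : ∏ k ∈ range m, (1 - s / (c + k)) ≤ (c / (c + m)) ^ s := by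
  induction m with
  | zero => simp [div_self hc.ne']
  | succ m ih =>
    have hcm : 0 < c + m := by positivity
    have hfac : 0 ≤ 1 - s / (c + m) :=
      sub_nonneg.2 ((div_le_one hcm).2 (by linarith [m.cast_nonneg (α := ℝ)]))
    calc ∏ k ∈ range (m + 1), (1 - s / (c + k))
        = (∏ k ∈ range m, (1 - s / (c + k))) * (1 - s / (c + m)) := prod_range_succ _ _
      _ ≤ (c / (c + m)) ^ s * ((c + m) / (c + m + 1)) ^ s :=
          mul_le_mul ih (one_sub_div_le_div_add_one_rpow hs hcm) hfac (by positivity)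
      _ = (c / (c + (m + 1 : ℕ))) ^ s := by
          rw [← Real.mul_rpow (by positivity) (by positivity)]
          congr 1; push_cast; field_simp; ring

/-- SGD with step size `α_k = a/(b+k)`, `a, b > 0`, `a σ_ℓ² ≤ b`, satisfies
`|E[⟨x_{n+1} − x*, v_ℓ⟩]| ≤ (b/(b+n))^{a σ_ℓ²} |⟨x_0 − x*, v_ℓ⟩|`,
the expectation averaging over all i.i.d. uniform index sequences. -/
theorem stmt_11 {M N : ℕ} (hM : 0 < M) (A : Matrix (Fin M) (Fin N) ℝ) (b : Fin M → ℝ)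
    (σℓ : ℝ) (v : Fin N → ℝ) (hv : (Aᵀ * A).mulVec v = σℓ ^ 2 • v)
    (xstar : Fin N → ℝ)
    (hxstar : ∀ y : Fin N → ℝ,
      (A.mulVec xstar - b) ⬝ᵥ (A.mulVec xstar - b) ≤ (A.mulVec y - b) ⬝ᵥ (A.mulVec y - b))
    (a c : ℝ) (ha : 0 < a) (hc : 0 < c) (hstep : a * σℓ ^ 2 ≤ c)
    (α : ℕ → ℝ) (hα : ∀ k, α k = a / (c + k))
    (x0 : Fin N → ℝ) (x : (ℕ → Fin M) → ℕ → (Fin N → ℝ))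
    (hx0 : ∀ ω, x ω 0 = x0)
    (hupd : ∀ ω k, x ω (k + 1) =
      x ω k + (α k * M * (b (ω k) - A (ω k) ⬝ᵥ x ω k)) • A (ω k)) (n : ℕ) :
    |(1 / (M : ℝ) ^ (n + 1)) *
        ∑ ω : Fin (n + 1) → Fin M,
          ((x (fun j => if h : j < n + 1 then ω ⟨j, h⟩ else ω 0) (n + 1) - xstar) ⬝ᵥ v)| ≤
      (c / (c + n)) ^ (a * σℓ ^ 2) * |(x0 - xstar) ⬝ᵥ v| := by
  set S : ℕ → ℝ := fun k => ∑ ω : Fin (n + 1) → Fin M, (x (padPath ω) k - xstar) ⬝ᵥ v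
  have hfactor : ∀ k, 1 - α k * σℓ ^ 2 = 1 - a * σℓ ^ 2 / (c + k) := fun k => by
    rw [hα]; ring
  have hS : ∀ k < n + 1, S (k + 1) = (1 - α k * σℓ ^ 2) * S k := fun k hk => by
    have h := card_mul_sum_iterate_succ (step := fun k => sgdStep A b (α k * M)) hx0 hupd
      (fun y => (y - xstar) ⬝ᵥ v) ⟨k, hk⟩
    simp only [sum_sgdStep_sub_dotProduct hxstar hv, Fintype.card_fin, ← mul_sum] at h
    refine mul_left_cancel₀ (by positivity : (M : ℝ) ≠ 0) (h.trans ?_)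
    ring
  have hS0 : S 0 = (M : ℝ) ^ (n + 1) * ((x0 - xstar) ⬝ᵥ v) := by
    simp only [S, hx0, sum_const, card_univ, Fintype.card_fun, Fintype.card_fin, nsmul_eq_mul,
      Nat.cast_pow]
  have hprod_nonneg : 0 ≤ ∏ k ∈ range (n + 1), (1 - α k * σℓ ^ 2) :=
    prod_nonneg fun k _ => by
      rw [hfactor, sub_nonneg, div_le_one (by positivity)]; linarith [k.cast_nonneg (α := ℝ)]
  have hprod_le : ∏ k ∈ range (n + 1), (1 - α k * σℓ ^ 2) ≤ (c / (c + n)) ^ (a * σℓ ^ 2) := by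
    simp only [hfactor]
    refine (prod_range_one_sub_div_le_rpow (by positivity) hc hstep (n + 1)).trans ?_
    gcongr
    linarith
  have hmean : 1 / (M : ℝ) ^ (n + 1) * S (n + 1) =
      (∏ k ∈ range (n + 1), (1 - α k * σℓ ^ 2)) * ((x0 - xstar) ⬝ᵥ v) := by
    rw [eq_prod_range_mul_of_succ_eq hS, hS0, mul_left_comm, one_div,
      inv_mul_cancel_left₀ (by positivity)]
  change |1 / (M : ℝ) ^ (n + 1) * S (n + 1)| ≤ _
  rw [hmean, abs_mul, abs_of_nonneg hprod_nonneg]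
  exact mul_le_mul_of_nonneg_right hprod_le (abs_nonneg _)
end
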